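/- The QEALM clause condition is preserved by Robinson's factoring rule: if the clause C ∨ p(t_1,...,t_n) ∨ p(s_1,...,s_n) satisfies the QEALM clause condition and σ is a most general unifier of p(t_1,...,t_n) and p(s_1,...,s_n), then the factor Cσ ∨ p(t_1,...,t_n)σ also satisfies the QEALM clause condition. -/

import Mathlib

/-- Terms over variables `V` and constant symbols `K`
(Bernays–Schönfinkel: the only function symbols are constants). -/
inductive Trm (V K : Type) : Type where
  | var : V → Trm V K
  | const : K → Trm V K
deriving DecidableEq

/-- A first-order literal (no equality): a polarity, a predicate symbol
and a list of argument terms. -/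
structure Lit (V K P : Type) : Type where
  pol : Bool
  pred : P
  args : List (Trm V K)
deriving DecidableEq

/-- A clause is a (finite) set of literals, read disjunctively. -/
abbrev Clause (V K P : Type) := Finset (Lit V K P)

/-- A CNF is a list of clauses, read conjunctively,
with all variables universally quantified. -/
abbrev CNF (V K P : Type) := List (Clause V K P)

variable {V K P : Type}

/-- The argument of a literal at the (1-based) position `i`. -/
def Lit.argAt (l : Lit V K P) : ℕ → Option (Trm V K)
  | 0 => none
  | i + 1 => l.args[i]?

/-- Variable `u` occurs at argument position `i` of the literal `l`. -/
def Lit.varAt (l : Lit V K P) (u : V) (i : ℕ) : Prop := l.argAt i = some (Trm.var u)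

/-- Variable `u` occurs in the literal `l`. -/
def Lit.hasVar (l : Lit V K P) (u : V) : Prop := ∃ i, l.varAt u i

/-- `i` is the least argument position at which `u` occurs in `l`. -/
def Lit.firstOccAt (l : Lit V K P) (u : V) (i : ℕ) : Prop :=
  l.varAt u i ∧ ∀ j, l.varAt u j → i ≤ j

/-- The QEALM clause condition: whenever a variable `u` occurs in several
literals of the clause, the least position at which it occurs is the same in
all these literals, and these literals agree on all argument positions up to
(and including) that one (a shared initial segment). -/
def QEALMClause (C : Clause V K P) : Prop :=
  ∀ (u : V), ∀ l₁ ∈ C, ∀ l₂ ∈ C, l₁.hasVar u → l₂.hasVar u →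
    ∃ i, l₁.firstOccAt u i ∧ l₂.firstOccAt u i ∧ ∀ j ≤ i, l₁.argAt j = l₂.argAt j

/-- A CNF is in the QEALM fragment iff every clause satisfies the QEALM clause condition. -/
def QEALM (φ : CNF V K P) : Prop := ∀ C ∈ φ, QEALMClause C

/-- A first-order structure for the signature `(K, P)` (no equality). -/
structure Model (K P : Type) : Type 1 where
  Dom : Type
  dne : Nonempty Dom
  constVal : K → Dom
  predVal : P → List Dom → Prop

/-- Value of a term in a model under a variable assignment. -/
def Trm.val (M : Model K P) (ρ : V → M.Dom) : Trm V K → M.Dom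
  | .var u => ρ u
  | .const c => M.constVal c

/-- Truth of a literal in a model under a variable assignment. -/
def Lit.holds (M : Model K P) (ρ : V → M.Dom) (l : Lit V K P) : Prop :=
  if l.pol then M.predVal l.pred (l.args.map (Trm.val M ρ))
  else ¬ M.predVal l.pred (l.args.map (Trm.val M ρ))

/-- Truth of a clause (a disjunction of literals). -/
def Clause.holds (M : Model K P) (ρ : V → M.Dom) (C : Clause V K P) : Prop :=
  ∃ l ∈ C, l.holds M ρ

/-- First-order satisfiability (without equality) of a universally quantified CNF. -/
def CNF.Satisfiable (φ : CNF V K P) : Prop :=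
  ∃ M : Model K P, ∀ ρ : V → M.Dom, ∀ C ∈ φ, C.holds M ρ

/-- Applying a substitution to a term. -/
def Trm.subst (σ : V → Trm V K) : Trm V K → Trm V K
  | .var u => σ u
  | .const c => .const c

/-- Applying a substitution to a literal. -/
def Lit.subst (σ : V → Trm V K) (l : Lit V K P) : Lit V K P :=
  ⟨l.pol, l.pred, l.args.map (Trm.subst σ)⟩

/-- Applying a substitution to a clause. -/
def Clause.subst [DecidableEq V] [DecidableEq K] [DecidableEq P]
    (σ : V → Trm V K) (C : Clause V K P) : Clause V K P :=
  C.image (Lit.subst σ)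

/-- Applying a substitution to a CNF. -/
def CNF.subst [DecidableEq V] [DecidableEq K] [DecidableEq P]
    (σ : V → Trm V K) (φ : CNF V K P) : CNF V K P :=
  φ.map (Clause.subst σ)

/-- An outer variable of a clause: a variable appearing in every literal of the clause. -/
def OuterVar (C : Clause V K P) (u : V) : Prop := ∀ l ∈ C, l.hasVar u

/-- `i` is the least position of an occurrence of `u` in any literal of `C`. -/
def LeastOccIn (C : Clause V K P) (u : V) (i : ℕ) : Prop :=
  (∃ l ∈ C, l.varAt u i) ∧ ∀ j, (∃ l ∈ C, l.varAt u j) → i ≤ j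

/-- `i` is an outer position of the clause `C`. -/
def OuterPosClause (C : Clause V K P) (i : ℕ) : Prop :=
  ∃ u : V, OuterVar C u ∧ LeastOccIn C u i

/-- `i` is a neutral position of the clause `C`: some term `t`, a constant or an
outer variable of `C`, occupies the `i`-th argument of every literal of `C`. -/
def NeutralPos (C : Clause V K P) (i : ℕ) : Prop :=
  ∃ t : Trm V K,
    ((∃ c, t = Trm.const c) ∨ (∃ u, t = Trm.var u ∧ OuterVar C u)) ∧
    ∀ l ∈ C, l.argAt i = some t

/-- `i` is an outer position of the CNF `φ`: an outer position of some clause and a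
neutral position of every clause. -/
def OuterPosCNF (φ : CNF V K P) (i : ℕ) : Prop :=
  (∃ C ∈ φ, OuterPosClause C i) ∧ ∀ D ∈ φ, NeutralPos D i

/-- Variable `u` occurs at argument position `i` in some literal of `φ`. -/
def VarOccursAt (φ : CNF V K P) (u : V) (i : ℕ) : Prop :=
  ∃ C ∈ φ, ∃ l ∈ C, l.varAt u i

/-- `σ` is the substitution that replaces every variable occurring at an argument
position `i` that is an outer position of `φ` by the constant `c i`, and leaves
all other variables unchanged. -/
def IsOuterSubst (φ : CNF V K P) (c : ℕ → K) (σ : V → Trm V K) : Prop :=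
  (∀ u i, OuterPosCNF φ i → VarOccursAt φ u i → σ u = Trm.const (c i)) ∧
  (∀ u, (¬ ∃ i, OuterPosCNF φ i ∧ VarOccursAt φ u i) → σ u = Trm.var u)

/-- A clause is inseparable if it is a single literal or some variable occurs in
every literal of the clause. -/
def InsepClause (C : Clause V K P) : Prop :=
  (∃ l, C = {l}) ∨ ∃ u : V, ∀ l ∈ C, l.hasVar u

/-- `Kc` is a component of a clause `C`: a non-empty inseparable subclause of `C`
closed under sharing variables with literals of `C`. -/
def IsComponent (Kc C : Clause V K P) : Prop :=
  Kc.Nonempty ∧ Kc ⊆ C ∧ InsepClause Kc ∧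
    ∀ a ∈ Kc, ∀ b ∈ C, (∃ u : V, a.hasVar u ∧ b.hasVar u) → b ∈ Kc

/-- All variables shared between `l₁` and `l₂` occur as arguments in positions `≤ m`. -/
def SharesUpTo (l₁ l₂ : Lit V K P) (m : ℕ) : Prop :=
  ∀ u : V, l₁.hasVar u → l₂.hasVar u →
    (∃ j ≤ m, l₁.varAt u j) ∧ (∃ j ≤ m, l₂.varAt u j)

/-- `i` is a fork index of `φ`: for some clause `C` of `φ` and literals `l₁, l₂` of
`C` (not necessarily distinct), `i` is the minimal value such that every variable
shared between `l₁` and `l₂` occurs at some argument position `≤ i`.  In particular,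
`0` is a fork index if some such pair shares no variables. -/
def ForkIndex (φ : CNF V K P) (i : ℕ) : Prop :=
  ∃ C ∈ φ, ∃ l₁ ∈ C, ∃ l₂ ∈ C, IsLeast {m | SharesUpTo l₁ l₂ m} i

/-- `σ` unifies the two argument lists `t` and `s` (i.e. the two atoms
`p(t₁,…,tₙ)` and `p(s₁,…,sₙ)`). -/
def Unifies (σ : V → Trm V K) (t s : List (Trm V K)) : Prop :=
  t.map (Trm.subst σ) = s.map (Trm.subst σ)

/-- `σ` is a most general unifier of the atoms with argument lists `t` and `s`:
it unifies them, and every unifier factors through it. -/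
def IsMGU (σ : V → Trm V K) (t s : List (Trm V K)) : Prop :=
  Unifies σ t s ∧
    ∀ τ : V → Trm V K, Unifies τ t s →
      ∃ δ : V → Trm V K, ∀ v, Trm.subst δ (σ v) = τ v

/-- The two clauses share no variables. -/
def VarDisjoint (C D : Clause V K P) : Prop :=
  ∀ u : V, (∃ l ∈ C, l.hasVar u) → ¬ ∃ l ∈ D, l.hasVar u

/-!
A most general unifier `σ` of `p(t)` and `p(s)` cannot identify a variable `x` occurring in
neither atom with another variable `y`: the unifier that fixes `x` and is `σ` followed by the
renaming `x ↦ y` elsewhere would not factor through `σ`.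

Hence a variable `u` of the factor either stems from variables of the two atoms, or from a single
variable that `σ` merely renames. In the second case the QEALM condition is inherited directly.
In the first, every literal of the clause containing such a variable shares, by the QEALM
condition, its initial segment up to that variable's first occurrence with `p(t)` or `p(s)`; after
substitution all literals containing `u` thus agree with `p(t)σ` up to their first `u`, which forces
these first occurrences to coincide.
-/

namespace Trm

variable {V K : Type}

theorem subst_subst (σ ρ : V → Trm V K) (a : Trm V K) :
    (a.subst σ).subst ρ = a.subst (fun v => (σ v).subst ρ) := by
  cases a <;> rfl

end Trm

section Unification

variable {V K : Type} {σ τ : V → Trm V K} {t s : List (Trm V K)}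

theorem Unifies.comp (h : Unifies σ t s) (ρ : V → Trm V K) :
    Unifies (fun v => (σ v).subst ρ) t s := by
  have hcomp : ∀ l : List (Trm V K),
      l.map (Trm.subst fun v => (σ v).subst ρ) = (l.map (Trm.subst σ)).map (Trm.subst ρ) := by
    simp [Function.comp_def, Trm.subst_subst]
  rw [Unifies, hcomp, hcomp, h]

theorem Unifies.of_eqOn (h : Unifies σ t s) (ht : ∀ v, Trm.var v ∈ t → τ v = σ v)
    (hs : ∀ v, Trm.var v ∈ s → τ v = σ v) : Unifies τ t s := by
  have agree : ∀ l : List (Trm V K), (∀ v, Trm.var v ∈ l → τ v = σ v) →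
      l.map (Trm.subst τ) = l.map (Trm.subst σ) := by
    intro l hl
    refine List.map_congr_left fun a ha => ?_
    cases a with
    | var v => exact hl v ha
    | const c => rfl
  rw [Unifies, agree t ht, agree s hs]
  exact h

theorem IsMGU.eq_of_subst_eq (hσ : IsMGU σ t s) {x y : V} (hxt : Trm.var x ∉ t)
    (hxs : Trm.var x ∉ s) (hxy : σ x = σ y) : x = y := by
  classical
  by_contra hne
  let ρ : V → Trm V K := fun w => .var (if w = x then y else w)
  let τ : V → Trm V K := Function.update (fun v => (σ v).subst ρ) x (.var x)
  have hτ : Unifies τ t s :=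
    (hσ.1.comp ρ).of_eqOn
      (fun v hv => Function.update_of_ne (by rintro rfl; exact hxt hv) _ _)
      (fun v hv => Function.update_of_ne (by rintro rfl; exact hxs hv) _ _)
  obtain ⟨δ, hδ⟩ := hσ.2 τ hτ
  have hτxy : τ x = τ y := by rw [← hδ, ← hδ, hxy]
  simp only [τ, Function.update_self, Function.update_of_ne (Ne.symm hne)] at hτxy
  cases hσy : σ y with
  | const c => simp [hσy, Trm.subst] at hτxy
  | var w =>
    simp only [hσy, Trm.subst, ρ, Trm.var.injEq] at hτxy
    split_ifs at hτxy with hwx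
    · exact hne hτxy
    · exact hwx hτxy.symm

end Unification

namespace Lit

variable {V K P : Type} {σ : V → Trm V K} {l l₁ l₂ R : Lit V K P} {u w : V} {i i₁ i₂ : ℕ}

theorem argAt_subst (σ : V → Trm V K) (l : Lit V K P) (j : ℕ) :
    (l.subst σ).argAt j = (l.argAt j).map (Trm.subst σ) := by
  cases j with
  | zero => rfl
  | succ i => simp [argAt, Lit.subst]

theorem varAt_subst {j : ℕ} : (l.subst σ).varAt u j ↔ ∃ w, l.varAt w j ∧ σ w = .var u := by
  simp only [varAt, argAt_subst, Option.map_eq_some_iff]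
  constructor
  · rintro ⟨a, ha, hσa⟩
    cases a with
    | var w => exact ⟨w, ha, hσa⟩
    | const c => cases hσa
  · rintro ⟨w, hw, hσw⟩
    exact ⟨_, hw, hσw⟩

theorem hasVar_iff_mem_args : l.hasVar u ↔ Trm.var u ∈ l.args := by
  simp only [hasVar, varAt, List.mem_iff_getElem?]
  constructor
  · rintro ⟨_ | i, hi⟩
    · cases hi
    · exact ⟨i, hi⟩
  · rintro ⟨i, hi⟩
    exact ⟨i + 1, hi⟩

theorem exists_firstOccAt (h : l.hasVar u) : ∃ i, l.firstOccAt u i :=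
  ⟨sInf {i | l.varAt u i}, Nat.sInf_mem h, fun _ hj => Nat.sInf_le hj⟩

theorem firstOccAt.unique (h : l.firstOccAt u i₁) (h' : l.firstOccAt u i₂) : i₁ = i₂ :=
  le_antisymm (h.2 _ h'.1) (h'.2 _ h.1)

theorem exists_firstOccAt_of_subst (h : (l.subst σ).firstOccAt u i) :
    ∃ w, σ w = .var u ∧ l.firstOccAt w i := by
  obtain ⟨w, hw, hσw⟩ := varAt_subst.1 h.1
  exact ⟨w, hσw, hw, fun j hj => h.2 j (varAt_subst.2 ⟨w, hj, hσw⟩)⟩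

theorem firstOccAt.subst_of_unique (h : l.firstOccAt w i) (hσw : σ w = .var u)
    (huniq : ∀ w', σ w' = .var u → w' = w) : (l.subst σ).firstOccAt u i := by
  refine ⟨varAt_subst.2 ⟨w, h.1, hσw⟩, fun j hj => ?_⟩
  obtain ⟨w', hw', hσw'⟩ := varAt_subst.1 hj
  exact h.2 j (huniq w' hσw' ▸ hw')

theorem firstOccAt_eq_of_agree (h₁ : l₁.firstOccAt u i₁) (h₂ : l₂.firstOccAt u i₂)
    (hR₁ : ∀ j ≤ i₁, l₁.argAt j = R.argAt j) (hR₂ : ∀ j ≤ i₂, l₂.argAt j = R.argAt j) :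
    i₁ = i₂ := by
  rcases le_total i₁ i₂ with hle | hle
  · exact le_antisymm hle (h₂.2 i₁ ((hR₂ i₁ hle).trans ((hR₁ i₁ le_rfl).symm.trans h₁.1)))
  · exact le_antisymm (h₁.2 i₂ ((hR₁ i₂ hle).trans ((hR₂ i₂ le_rfl).symm.trans h₂.1))) hle

end Lit

namespace QEALMClause

variable {V K P : Type} {D : Clause V K P}

theorem agree_of_firstOccAt (hD : QEALMClause D) {l R : Lit V K P} {w : V} {i : ℕ}
    (hl : l ∈ D) (hR : R ∈ D) (hw : l.firstOccAt w i) (hRw : R.hasVar w) :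
    ∀ j ≤ i, l.argAt j = R.argAt j := by
  obtain ⟨i', hw', -, hagree⟩ := hD w l hl R hR ⟨i, hw.1⟩ hRw
  exact hw.unique hw' ▸ hagree

theorem subst_of_unifies [DecidableEq V] [DecidableEq K] [DecidableEq P] (hD : QEALMClause D)
    {S : Clause V K P} {σ : V → Trm V K} {R' : Lit V K P} (hSD : S ⊆ D)
    (hS : ∀ R ∈ S, R.subst σ = R')
    (hinj : ∀ x y, (∀ R ∈ S, ¬ R.hasVar x) → σ x = σ y → x = y) :
    QEALMClause (Clause.subst σ D) := by
  intro u l₁' hl₁' l₂' hl₂' hu₁ hu₂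
  obtain ⟨l₁, hl₁, rfl⟩ := Finset.mem_image.1 hl₁'
  obtain ⟨l₂, hl₂, rfl⟩ := Finset.mem_image.1 hl₂'
  obtain ⟨i₁, hi₁⟩ := Lit.exists_firstOccAt hu₁
  obtain ⟨i₂, hi₂⟩ := Lit.exists_firstOccAt hu₂
  by_cases hT : ∃ R ∈ S, ∃ w, σ w = .var u ∧ R.hasVar w
  · have agree : ∀ l ∈ D, ∀ i, (l.subst σ).firstOccAt u i →
        ∀ j ≤ i, (l.subst σ).argAt j = R'.argAt j := by
      intro l hl i hi j hj
      obtain ⟨w, hσw, hw⟩ := Lit.exists_firstOccAt_of_subst hi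
      obtain ⟨R, hRS, hRw⟩ : ∃ R ∈ S, R.hasVar w := by
        by_contra! hwS
        obtain ⟨R, hRS, w', hσw', hRw'⟩ := hT
        exact hwS R hRS (hinj w w' hwS (hσw.trans hσw'.symm) ▸ hRw')
      rw [← hS R hRS, Lit.argAt_subst, Lit.argAt_subst,
        hD.agree_of_firstOccAt hl (hSD hRS) hw hRw j hj]
    obtain rfl := Lit.firstOccAt_eq_of_agree hi₁ hi₂ (agree l₁ hl₁ i₁ hi₁) (agree l₂ hl₂ i₂ hi₂)
    exact ⟨i₁, hi₁, hi₂, fun j hj => (agree l₁ hl₁ i₁ hi₁ j hj).trans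
      (agree l₂ hl₂ i₁ hi₂ j hj).symm⟩
  · push Not at hT
    obtain ⟨w₁, hσw₁, hw₁⟩ := Lit.exists_firstOccAt_of_subst hi₁
    obtain ⟨w₂, hσw₂, hw₂⟩ := Lit.exists_firstOccAt_of_subst hi₂
    have huniq : ∀ w, σ w = .var u → w = w₁ := fun w hw =>
      (hinj w₁ w (fun R hR => hT R hR w₁ hσw₁) (hσw₁.trans hw.symm)).symm
    rw [huniq w₂ hσw₂] at hw₂
    obtain ⟨i, h₁, h₂, hagree⟩ := hD w₁ l₁ hl₁ l₂ hl₂ ⟨i₁, hw₁.1⟩ ⟨i₂, hw₂.1⟩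
    exact ⟨i, h₁.subst_of_unique hσw₁ huniq, h₂.subst_of_unique hσw₁ huniq,
      fun j hj => by rw [Lit.argAt_subst, Lit.argAt_subst, hagree j hj]⟩

end QEALMClause

theorem statement_9_general [DecidableEq V] [DecidableEq K] [DecidableEq P]
    (C : Clause V K P) (p : P) (t s : List (Trm V K)) (σ : V → Trm V K)
    (hq : QEALMClause (insert (⟨true, p, t⟩ : Lit V K P)
            (insert (⟨true, p, s⟩ : Lit V K P) C)))
    (hmgu : IsMGU σ t s) :
    QEALMClause (insert (Lit.subst σ (⟨true, p, t⟩ : Lit V K P))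
      (Clause.subst σ C)) := by
  have hσ : Lit.subst σ (⟨true, p, s⟩ : Lit V K P) = Lit.subst σ ⟨true, p, t⟩ := by
    have hunif : t.map (Trm.subst σ) = s.map (Trm.subst σ) := hmgu.1
    simp only [Lit.subst, hunif]
  have hfactor : Clause.subst σ (insert ⟨true, p, t⟩ (insert ⟨true, p, s⟩ C)) =
      insert (Lit.subst σ ⟨true, p, t⟩) (Clause.subst σ C) := by
    simp only [Clause.subst, Finset.image_insert, hσ, Finset.insert_idem]
  rw [← hfactor]
  refine hq.subst_of_unifies (S := {⟨true, p, t⟩, ⟨true, p, s⟩})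
    (R' := Lit.subst σ ⟨true, p, t⟩) ?_ ?_ ?_
  · exact Finset.insert_subset_insert _ (by simp)
  · simp [hσ]
  · intro x y hx hxy
    simp only [Finset.mem_insert, Finset.mem_singleton, forall_eq_or_imp, forall_eq,
      Lit.hasVar_iff_mem_args] at hx
    exact hmgu.eq_of_subst_eq hx.1 hx.2 hxy

/-- Robinson's factoring rule preserves the QEALM clause
condition: if the clause `C ∨ p(t₁,…,tₙ) ∨ p(s₁,…,sₙ)` satisfies the QEALM
clause condition and `σ` is a most general unifier of `p(t₁,…,tₙ)` and
`p(s₁,…,sₙ)`, then the factor `Cσ ∨ p(t₁,…,tₙ)σ` also satisfies the QEALM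
clause condition. -/
theorem statement_9 [DecidableEq V] [DecidableEq K] [DecidableEq P]
    (C : Clause V K P) (p : P) (t s : List (Trm V K)) (σ : V → Trm V K)
    (hlen : t.length = s.length)
    (hq : QEALMClause (insert (⟨true, p, t⟩ : Lit V K P)
            (insert (⟨true, p, s⟩ : Lit V K P) C)))
    (hmgu : IsMGU σ t s) :
    QEALMClause (insert (Lit.subst σ (⟨true, p, t⟩ : Lit V K P))
      (Clause.subst σ C)) :=
  statement_9_general C p t s σ hq hmgu
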